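/- arXiv:2011.11743 — 5 statements merged into one kernel-verified Lean document; each statement's English description precedes it below -/
import Mathlib

section
/- If a fractional flow in a DAG with vertex capacities is maximal (i.e., for every source vertex not fully routed, every path from it to the sink contains a saturated vertex), then its value is at least 1/(d+1) times the maximum flow value, where d is the maximum number of capacitated vertices on any source-sink path. -/
/-!
Dual fitting. Let `γ_i` be the amount of flow that `x` routes out of source `i`, and give every
vertex saturated by `x` the dual value `1`. Maximality says that each path either leaves a fully
routed source or meets a saturated vertex, so these duals cover every path with total weight at
least `1`, and weak duality bounds any feasible `y` by their cost. That cost is `∑ x` for the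
sources, plus the total capacity of the saturated vertices, which is the load `x` puts on them,
hence at most `d · ∑ x` because each path of `x` meets at most `d` vertices.
-/

open Finset

namespace PathFlow

variable {ι V P : Type*} [Fintype P]

def sourceLoad [DecidableEq ι] (src : P → ι) (x : P → ℝ) (i : ι) : ℝ :=
  ∑ p ∈ univ.filter (fun p => src p = i), x p

def vertexLoad [DecidableEq V] (thru : P → Finset V) (x : P → ℝ) (v : V) : ℝ :=
  ∑ p ∈ univ.filter (fun p => v ∈ thru p), x p

section Sources

variable [DecidableEq ι] (src : P → ι)

theorem sum_mul_sourceLoad_comm (x y : P → ℝ) :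
    ∑ p, y p * sourceLoad src x (src p) = ∑ p, x p * sourceLoad src y (src p) := by
  simp only [sourceLoad, mul_sum, sum_filter, mul_ite, mul_zero]
  rw [sum_comm]
  refine sum_congr rfl fun p _ => sum_congr rfl fun q _ => ?_
  simp only [eq_comm (a := src q), mul_comm]

theorem sum_mul_sourceLoad_le {x y : P → ℝ} (hx : ∀ p, 0 ≤ x p)
    (hy : ∀ i, sourceLoad src y i ≤ 1) :
    ∑ p, x p * sourceLoad src y (src p) ≤ ∑ p, x p :=
  sum_le_sum fun p _ => mul_le_of_le_one_right (hx p) (hy (src p))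

end Sources

section Vertices

variable (thru : P → Finset V) (s : V → Prop) [DecidablePred s]

theorem sum_mul_card_filter_eq [DecidableEq V] (z : P → ℝ) :
    ∑ p, z p * #((thru p).filter s) =
      ∑ v ∈ (univ.biUnion thru).filter s, vertexLoad thru z v := by
  simp only [vertexLoad, card_eq_sum_ones, Nat.cast_sum, Nat.cast_one, mul_sum, mul_one]
  exact sum_comm' fun p v => by simp only [mem_univ, mem_filter, mem_biUnion]; grind

theorem sum_mul_card_filter_le {d : ℕ} (hd : ∀ p, #(thru p) ≤ d) {x : P → ℝ}
    (hx : ∀ p, 0 ≤ x p) :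
    ∑ p, x p * #((thru p).filter s) ≤ d * ∑ p, x p := by
  rw [mul_sum]
  refine sum_le_sum fun p _ => ?_
  rw [mul_comm]
  exact mul_le_mul_of_nonneg_right (by exact_mod_cast (card_filter_le _ _).trans (hd p)) (hx p)

end Vertices

theorem one_le_sourceLoad_add_card_saturated [DecidableEq ι] [DecidableEq V]
    {src : P → ι} {thru : P → Finset V} {C : V → ℝ} {x : P → ℝ} (hx : ∀ p, 0 ≤ x p)
    (hmax : ∀ p, sourceLoad src x (src p) < 1 → ∃ v ∈ thru p, vertexLoad thru x v = C v)
    (p : P) :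
    1 ≤ sourceLoad src x (src p) + #((thru p).filter fun v => vertexLoad thru x v = C v) := by
  have hload : 0 ≤ sourceLoad src x (src p) := sum_nonneg fun q _ => hx q
  by_cases hfull : sourceLoad src x (src p) < 1
  · obtain ⟨v, hv, hsat⟩ := hmax p hfull
    have : (1 : ℝ) ≤ #((thru p).filter fun v => vertexLoad thru x v = C v) := by
      exact_mod_cast card_pos.2 ⟨v, mem_filter.2 ⟨hv, hsat⟩⟩
    linarith
  · have := Nat.cast_nonneg (α := ℝ) #((thru p).filter fun v => vertexLoad thru x v = C v)
    linarith

end PathFlow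

open PathFlow

theorem maximal_flow_competitive_general
    {ι V P : Type*} [Fintype P] [DecidableEq ι] [DecidableEq V]
    (src : P → ι) (thru : P → Finset V) (C : V → ℝ) (d : ℕ)
    (hd : ∀ p : P, (thru p).card ≤ d)
    (x : P → ℝ) (hx : ∀ p, 0 ≤ x p)
    (hmax : ∀ p : P, ∑ q ∈ univ.filter (fun q => src q = src p), x q < 1 →
      ∃ v ∈ thru p, ∑ q ∈ univ.filter (fun q => v ∈ thru q), x q = C v)
    (y : P → ℝ) (hy : ∀ p, 0 ≤ y p)
    (hysrc : ∀ i : ι, ∑ p ∈ univ.filter (fun p => src p = i), y p ≤ 1)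
    (hycap : ∀ v : V, ∑ p ∈ univ.filter (fun p => v ∈ thru p), y p ≤ C v) :
    ∑ p, y p ≤ (d + 1 : ℝ) * ∑ p, x p := by
  set sat : V → Prop := fun v => vertexLoad thru x v = C v
  calc ∑ p, y p
      ≤ ∑ p, y p * (sourceLoad src x (src p) + #((thru p).filter sat)) :=
        sum_le_sum fun p _ =>
          le_mul_of_one_le_right (hy p) (one_le_sourceLoad_add_card_saturated hx hmax p)
    _ = ∑ p, x p * sourceLoad src y (src p) +
          ∑ v ∈ (univ.biUnion thru).filter sat, vertexLoad thru y v := by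
        simp only [mul_add, sum_add_distrib, sum_mul_sourceLoad_comm, sum_mul_card_filter_eq]
    _ ≤ ∑ p, x p + ∑ v ∈ (univ.biUnion thru).filter sat, vertexLoad thru x v :=
        add_le_add (sum_mul_sourceLoad_le src hx hysrc)
          (sum_le_sum fun v hv => (hycap v).trans_eq (mem_filter.1 hv).2.symm)
    _ ≤ ∑ p, x p + d * ∑ p, x p := by
        rw [← sum_mul_card_filter_eq]
        gcongr
        exact sum_mul_card_filter_le thru sat hd hx
    _ = (d + 1 : ℝ) * ∑ p, x p := by ring

/-- A maximal fractional path flow in a vertex-capacitated DAG has value at least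
`1/(d+1)` times the optimum, where every path crosses at most `d` capacitated vertices.
Stated equivalently: any feasible flow `y` has value at most `(d+1)` times the value of
the maximal flow `x`. -/
theorem maximal_flow_competitive
    {ι V P : Type*} [Fintype ι] [Fintype V] [Fintype P] [DecidableEq ι] [DecidableEq V]
    (src : P → ι) (thru : P → Finset V) (C : V → ℝ) (d : ℕ)
    (hd : ∀ p : P, (thru p).card ≤ d)
    (x : P → ℝ) (hx : ∀ p, 0 ≤ x p)
    (hsrc : ∀ i : ι, ∑ p ∈ univ.filter (fun p => src p = i), x p ≤ 1)
    (hcap : ∀ v : V, ∑ p ∈ univ.filter (fun p => v ∈ thru p), x p ≤ C v)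
    (hmax : ∀ p : P, ∑ q ∈ univ.filter (fun q => src q = src p), x q < 1 →
      ∃ v ∈ thru p, ∑ q ∈ univ.filter (fun q => v ∈ thru q), x q = C v)
    (y : P → ℝ) (hy : ∀ p, 0 ≤ y p)
    (hysrc : ∀ i : ι, ∑ p ∈ univ.filter (fun p => src p = i), y p ≤ 1)
    (hycap : ∀ v : V, ∑ p ∈ univ.filter (fun p => v ∈ thru p), y p ≤ C v) :
    ∑ p, y p ≤ (d + 1 : ℝ) * ∑ p, x p :=
  maximal_flow_competitive_general src thru C d hd x hx hmax y hy hysrc hycap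
end

section
/- Let x be a maximal fractional path flow. Define gamma_i = sum_{p in P_i} x_{i,p} and y_v = (sum over paths through v of flow) / C_v. Then (y, gamma) is a feasible solution to the dual LP, and sum_v y_v C_v + sum_i gamma_i <= (d+1) * (value of x), where d bounds the number of capacitated vertices on any path. -/
/-!
Each source `i` either is saturated (`γ i = 1`), or by maximality every path of `i` meets a
vertex `v` with `y v = 1`; either way the dual constraint of every path holds. For the value,
`y v * C v` is the load of `v`, so `∑ v, y v * C v` counts every path once per capacitated
vertex on it, i.e. at most `d` times, while `∑ i, γ i` counts it once more.
-/

open Finset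

theorem sum_sum_filter_mem_eq_sum_card_smul {V P M : Type*} [Fintype V] [Fintype P]
    [DecidableEq V] [AddCommMonoid M] (thru : P → Finset V) (x : P → M) :
    ∑ v, ∑ q ∈ univ.filter (fun q => v ∈ thru q), x q = ∑ p, (thru p).card • x p := by
  simp_rw [sum_filter]
  rw [sum_comm]
  refine sum_congr rfl fun p _ => ?_
  rw [sum_ite_mem, univ_inter, sum_const]

theorem one_le_sum_div_of_exists_eq {V K : Type*} [Field K] [LinearOrder K]
    [IsStrictOrderedRing K] {s : Finset V} {ℓ C : V → K} (hℓ : ∀ v ∈ s, 0 ≤ ℓ v)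
    (hC : ∀ v ∈ s, 0 < C v) (hsat : ∃ v ∈ s, ℓ v = C v) :
    1 ≤ ∑ v ∈ s, ℓ v / C v := by
  obtain ⟨v, hv, hℓv⟩ := hsat
  calc (1 : K) = ℓ v / C v := by rw [hℓv, div_self (hC v hv).ne']
    _ ≤ ∑ v ∈ s, ℓ v / C v :=
      single_le_sum (fun w hw => div_nonneg (hℓ w hw) (hC w hw).le) hv

theorem maximal_flow_dual_solution_general
    {ι V P : Type*} [Fintype ι] [Fintype V] [Fintype P] [DecidableEq ι] [DecidableEq V]
    (src : P → ι) (thru : P → Finset V) (C : V → ℝ) (d : ℕ)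
    (hC : ∀ v, 0 < C v)
    (hd : ∀ p : P, (thru p).card ≤ d)
    (x : P → ℝ) (hx : ∀ p, 0 ≤ x p)
    (hmax : ∀ p : P, ∑ q ∈ univ.filter (fun q => src q = src p), x q < 1 →
      ∃ v ∈ thru p, ∑ q ∈ univ.filter (fun q => v ∈ thru q), x q = C v) :
    (∀ p : P,
        1 ≤ (∑ v ∈ thru p, (∑ q ∈ univ.filter (fun q => v ∈ thru q), x q) / C v) +
            ∑ q ∈ univ.filter (fun q => src q = src p), x q) ∧
    (∑ v, ((∑ q ∈ univ.filter (fun q => v ∈ thru q), x q) / C v) * C v +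
        ∑ i, ∑ p ∈ univ.filter (fun p => src p = i), x p) ≤ (d + 1 : ℝ) * ∑ p, x p := by
  have hload (v : V) : 0 ≤ ∑ q ∈ univ.filter (fun q => v ∈ thru q), x q :=
    sum_nonneg fun q _ => hx q
  refine ⟨fun p => ?_, ?_⟩
  · have hγ : 0 ≤ ∑ q ∈ univ.filter (fun q => src q = src p), x q := sum_nonneg fun q _ => hx q
    by_cases hsat : ∑ q ∈ univ.filter (fun q => src q = src p), x q < 1
    · have := one_le_sum_div_of_exists_eq (fun v _ => hload v) (fun v _ => hC v) (hmax p hsat)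
      linarith
    · have : 0 ≤ ∑ v ∈ thru p, (∑ q ∈ univ.filter (fun q => v ∈ thru q), x q) / C v :=
        sum_nonneg fun v _ => div_nonneg (hload v) (hC v).le
      linarith
  · calc _ = ∑ p, (thru p).card • x p + ∑ p, x p := by
          simp_rw [div_mul_cancel₀ _ (hC _).ne']
          rw [sum_sum_filter_mem_eq_sum_card_smul, sum_fiberwise]
      _ ≤ ∑ p, d * x p + ∑ p, x p := by
          gcongr with p
          rw [nsmul_eq_mul]
          exact mul_le_mul_of_nonneg_right (by exact_mod_cast hd p) (hx p)
      _ = (d + 1 : ℝ) * ∑ p, x p := by rw [← mul_sum]; ring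

/-- For a maximal fractional path flow `x`, the dual solution given by
`γ i = ` matched fraction of source `i` and `y v = load(v)/C v` is feasible for the
dual LP, and its value is at most `(d+1)` times the value of `x`. -/
theorem maximal_flow_dual_solution
    {ι V P : Type*} [Fintype ι] [Fintype V] [Fintype P] [DecidableEq ι] [DecidableEq V]
    (src : P → ι) (thru : P → Finset V) (C : V → ℝ) (d : ℕ)
    (hC : ∀ v, 0 < C v)
    (hd : ∀ p : P, (thru p).card ≤ d)
    (x : P → ℝ) (hx : ∀ p, 0 ≤ x p)
    (hsrc : ∀ i : ι, ∑ p ∈ univ.filter (fun p => src p = i), x p ≤ 1)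
    (hcap : ∀ v : V, ∑ p ∈ univ.filter (fun p => v ∈ thru p), x p ≤ C v)
    (hmax : ∀ p : P, ∑ q ∈ univ.filter (fun q => src q = src p), x q < 1 →
      ∃ v ∈ thru p, ∑ q ∈ univ.filter (fun q => v ∈ thru q), x q = C v) :
    (∀ p : P,
        1 ≤ (∑ v ∈ thru p, (∑ q ∈ univ.filter (fun q => v ∈ thru q), x q) / C v) +
            ∑ q ∈ univ.filter (fun q => src q = src p), x q) ∧
    (∑ v, ((∑ q ∈ univ.filter (fun q => v ∈ thru q), x q) / C v) * C v +
        ∑ i, ∑ p ∈ univ.filter (fun p => src p = i), x p) ≤ (d + 1 : ℝ) * ∑ p, x p :=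
  maximal_flow_dual_solution_general src thru C d hC hd x hx hmax
end

section
/- In the bipartite proportional allocation algorithm where each advertiser weight is multiplied by 1/(1+eps) in every iteration where its allocation exceeds (1+eps) times its capacity, after the final iteration T: every advertiser whose weight was decreased at least once has allocation at least its capacity, and every advertiser that skipped at least one decrease has allocation at most (1+eps)^2 times its capacity. -/
open Finset

/-- The allocation of advertiser `a` under weights `w`: each impression `i` splits its
unit of flow among its neighborhood `N i` proportionally to the weights. -/
noncomputable def Alloc {I A : Type*} [Fintype I] [DecidableEq A]
    (N : I → Finset A) (w : A → ℝ) (a : A) : ℝ :=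
  ∑ i : I, if a ∈ N i then w a / ∑ a' ∈ N i, w a' else 0

/-!
Each iteration multiplies every weight by a factor in `[1/(1+ε), 1]`. Such a reweighting changes
the allocation of `a` by the ratio of its own weight, up to a factor `1+ε`: the denominators
`∑ b ∈ N i, w b` shrink by at most `1+ε`. Hence an iteration that decreases `α a` lowers `Alloc a`
by at most `1+ε`, and one that keeps `α a` raises `Alloc a` by at most `1+ε`. After a decrease,
`Alloc a ≥ (1+ε) C a / (1+ε) = C a`, and from then on `Alloc a` only drops when it is at least
`(1+ε) C a`; symmetrically, after a skipped decrease `Alloc a < (1+ε)^2 C a`, and it only grows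
when it is below `(1+ε) C a`.
-/

section Reweighting

variable {I A : Type*} [Fintype I] [DecidableEq A] (N : I → Finset A) {w w' : A → ℝ}

theorem div_mul_Alloc_le_Alloc_of_le (hw' : ∀ b, 0 < w' b) (hle : ∀ b, w' b ≤ w b) (a : A) :
    w' a / w a * Alloc N w a ≤ Alloc N w' a := by
  rw [Alloc, Alloc, mul_sum]
  refine sum_le_sum fun i _ => ?_
  split_ifs with ha
  · have hpos : 0 < ∑ b ∈ N i, w' b := sum_pos (fun b _ => hw' b) ⟨a, ha⟩
    calc w' a / w a * (w a / ∑ b ∈ N i, w b) = w' a / ∑ b ∈ N i, w b := by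
          field_simp [((hw' a).trans_le (hle a)).ne']
      _ ≤ w' a / ∑ b ∈ N i, w' b :=
          div_le_div_of_nonneg_left (hw' a).le hpos (sum_le_sum fun b _ => hle b)
  · simp

theorem Alloc_le_mul_div_mul_Alloc {c : ℝ} (hc : 0 < c) (hw : ∀ b, 0 < w b)
    (hw' : ∀ b, 0 < w' b) (hge : ∀ b, w b ≤ c * w' b) (a : A) :
    Alloc N w' a ≤ c * (w' a / w a) * Alloc N w a := by
  rw [Alloc, Alloc, mul_sum]
  refine sum_le_sum fun i _ => ?_
  split_ifs with ha
  · have hpos : 0 < ∑ b ∈ N i, w b := sum_pos (fun b _ => hw b) ⟨a, ha⟩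
    have hpos' : 0 < ∑ b ∈ N i, w' b := sum_pos (fun b _ => hw' b) ⟨a, ha⟩
    have hsum : ∑ b ∈ N i, w b ≤ c * ∑ b ∈ N i, w' b := by
      rw [mul_sum]; exact sum_le_sum fun b _ => hge b
    calc w' a / ∑ b ∈ N i, w' b = c * w' a / (c * ∑ b ∈ N i, w' b) := by
          rw [mul_div_mul_left _ _ hc.ne']
      _ ≤ c * w' a / ∑ b ∈ N i, w b :=
          div_le_div_of_nonneg_left (mul_pos hc (hw' a)).le hpos hsum
      _ = c * (w' a / w a) * (w a / ∑ b ∈ N i, w b) := by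
          field_simp [(hw a).ne']
  · simp

end Reweighting

def IsProportionalAllocRun {I A : Type*} [Fintype I] [DecidableEq A] (N : I → Finset A)
    (C : A → ℝ) (ε : ℝ) (α : ℕ → A → ℝ) : Prop :=
  ∀ t a, α (t + 1) a = if (1 + ε) * C a ≤ Alloc N (α t) a then α t a / (1 + ε) else α t a

namespace IsProportionalAllocRun

variable {I A : Type*} [Fintype I] [DecidableEq A] {N : I → Finset A} {C : A → ℝ} {ε : ℝ}
  {α : ℕ → A → ℝ}

theorem pos (h : IsProportionalAllocRun N C ε α) (hε : 0 ≤ ε) (h0 : ∀ a, 0 < α 0 a)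
    (t : ℕ) (a : A) : 0 < α t a := by
  induction t with
  | zero => exact h0 a
  | succ t ih => rw [h]; split_ifs <;> positivity

theorem succ_le (h : IsProportionalAllocRun N C ε α) (hε : 0 ≤ ε) (h0 : ∀ a, 0 < α 0 a)
    (t : ℕ) (a : A) : α (t + 1) a ≤ α t a := by
  rw [h]; split_ifs
  · exact div_le_self (h.pos hε h0 t a).le (by linarith)
  · exact le_rfl

theorem le_mul_succ (h : IsProportionalAllocRun N C ε α) (hε : 0 ≤ ε) (h0 : ∀ a, 0 < α 0 a)
    (t : ℕ) (a : A) : α t a ≤ (1 + ε) * α (t + 1) a := by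
  rw [h]; split_ifs
  · rw [mul_div_cancel₀ _ (by linarith)]
  · nlinarith [h.pos hε h0 t a]

theorem Alloc_succ_of_overallocated (h : IsProportionalAllocRun N C ε α) (hε : 0 ≤ ε)
    (h0 : ∀ a, 0 < α 0 a) {t : ℕ} {a : A} (hover : (1 + ε) * C a ≤ Alloc N (α t) a) :
    Alloc N (α t) a / (1 + ε) ≤ Alloc N (α (t + 1)) a ∧
      Alloc N (α (t + 1)) a ≤ Alloc N (α t) a := by
  have hratio : α (t + 1) a / α t a = 1 / (1 + ε) := by
    rw [h, if_pos hover]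
    field_simp [(h.pos hε h0 t a).ne']
  have lower := div_mul_Alloc_le_Alloc_of_le N (h.pos hε h0 (t + 1)) (h.succ_le hε h0 t) a
  have upper := Alloc_le_mul_div_mul_Alloc N (by linarith) (h.pos hε h0 t)
    (h.pos hε h0 (t + 1)) (h.le_mul_succ hε h0 t) a
  rw [hratio] at lower upper
  constructor
  · rwa [one_div_mul_eq_div] at lower
  · rwa [mul_one_div_cancel (by linarith), one_mul] at upper

theorem Alloc_succ_of_not_overallocated (h : IsProportionalAllocRun N C ε α) (hε : 0 ≤ ε)
    (h0 : ∀ a, 0 < α 0 a) {t : ℕ} {a : A} (hunder : ¬(1 + ε) * C a ≤ Alloc N (α t) a) :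
    Alloc N (α t) a ≤ Alloc N (α (t + 1)) a ∧
      Alloc N (α (t + 1)) a ≤ (1 + ε) * Alloc N (α t) a := by
  have hratio : α (t + 1) a / α t a = 1 := by
    rw [h, if_neg hunder, div_self (h.pos hε h0 t a).ne']
  have lower := div_mul_Alloc_le_Alloc_of_le N (h.pos hε h0 (t + 1)) (h.succ_le hε h0 t) a
  have upper := Alloc_le_mul_div_mul_Alloc N (by linarith) (h.pos hε h0 t)
    (h.pos hε h0 (t + 1)) (h.le_mul_succ hε h0 t) a
  rw [hratio, one_mul] at lower
  rw [hratio, mul_one] at upper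
  exact ⟨lower, upper⟩

theorem capacity_le_Alloc_of_overallocated (h : IsProportionalAllocRun N C ε α) (hε : 0 ≤ ε)
    (h0 : ∀ a, 0 < α 0 a) {t s : ℕ} (hts : t < s) {a : A}
    (hover : (1 + ε) * C a ≤ Alloc N (α t) a) : C a ≤ Alloc N (α s) a := by
  have hε1 : 0 < 1 + ε := by linarith
  have of_over : ∀ u, (1 + ε) * C a ≤ Alloc N (α u) a → C a ≤ Alloc N (α (u + 1)) a :=
    fun u hu => ((le_div_iff₀' hε1).2 hu).trans (h.Alloc_succ_of_overallocated hε h0 hu).1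
  induction s, hts using Nat.le_induction with
  | base => exact of_over t hover
  | succ s _ ih =>
    by_cases hs : (1 + ε) * C a ≤ Alloc N (α s) a
    · exact of_over s hs
    · exact ih.trans (h.Alloc_succ_of_not_overallocated hε h0 hs).1

theorem Alloc_le_of_not_overallocated (h : IsProportionalAllocRun N C ε α) (hε : 0 ≤ ε)
    (h0 : ∀ a, 0 < α 0 a) {t s : ℕ} (hts : t < s) {a : A}
    (hunder : ¬(1 + ε) * C a ≤ Alloc N (α t) a) :
    Alloc N (α s) a ≤ (1 + ε) ^ 2 * C a := by
  have of_under : ∀ u, ¬(1 + ε) * C a ≤ Alloc N (α u) a →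
      Alloc N (α (u + 1)) a ≤ (1 + ε) ^ 2 * C a := fun u hu =>
    calc Alloc N (α (u + 1)) a ≤ (1 + ε) * Alloc N (α u) a :=
          (h.Alloc_succ_of_not_overallocated hε h0 hu).2
      _ ≤ (1 + ε) * ((1 + ε) * C a) := by gcongr; exact (not_le.1 hu).le
      _ = (1 + ε) ^ 2 * C a := by ring
  induction s, hts using Nat.le_induction with
  | base => exact of_under t hunder
  | succ s _ ih =>
    by_cases hs : (1 + ε) * C a ≤ Alloc N (α s) a
    · exact (h.Alloc_succ_of_overallocated hε h0 hs).2.trans ih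
    · exact of_under s hs

end IsProportionalAllocRun

theorem bipartite_prop_alloc_final_bounds_general
    {I A : Type*} [Fintype I] [DecidableEq A]
    (N : I → Finset A)
    (C : A → ℝ)
    (ε : ℝ) (hε : 0 < ε) (T : ℕ)
    (α : ℕ → A → ℝ) (hα0 : ∀ a, α 0 a = 1)
    (hstep : ∀ t a, α (t + 1) a =
      if (1 + ε) * C a ≤ Alloc N (α t) a then α t a / (1 + ε) else α t a) :
    ∀ a : A,
      ((∃ t < T, (1 + ε) * C a ≤ Alloc N (α t) a) → C a ≤ Alloc N (α T) a) ∧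
      ((∃ t < T, Alloc N (α t) a < (1 + ε) * C a) →
        Alloc N (α T) a ≤ (1 + ε) ^ 2 * C a) := by
  have run : IsProportionalAllocRun N C ε α := hstep
  have h0 : ∀ a, 0 < α 0 a := fun a => hα0 a ▸ one_pos
  exact fun a =>
    ⟨fun ⟨t, htT, hover⟩ => run.capacity_le_Alloc_of_overallocated hε.le h0 htT hover,
      fun ⟨t, htT, hunder⟩ => run.Alloc_le_of_not_overallocated hε.le h0 htT hunder.not_ge⟩

/-- In the bipartite proportional allocation algorithm (weights start at 1; in each
iteration every over-allocated advertiser has its weight divided by `1+ε`), after the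
final iteration `T`: every advertiser that was decreased at least once has allocation at
least its capacity, and every advertiser that skipped at least one decrease has
allocation at most `(1+ε)^2` times its capacity. -/
theorem bipartite_prop_alloc_final_bounds
    {I A : Type*} [Fintype I] [Fintype A] [DecidableEq A]
    (N : I → Finset A) (hN : ∀ i, (N i).Nonempty)
    (C : A → ℝ) (hC : ∀ a, 0 < C a)
    (ε : ℝ) (hε : 0 < ε) (T : ℕ)
    (α : ℕ → A → ℝ) (hα0 : ∀ a, α 0 a = 1)
    (hstep : ∀ t a, α (t + 1) a =
      if (1 + ε) * C a ≤ Alloc N (α t) a then α t a / (1 + ε) else α t a) :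
    ∀ a : A,
      ((∃ t < T, (1 + ε) * C a ≤ Alloc N (α t) a) → C a ≤ Alloc N (α T) a) ∧
      ((∃ t < T, Alloc N (α t) a < (1 + ε) * C a) →
        Alloc N (α T) a ≤ (1 + ε) ^ 2 * C a) :=
  bipartite_prop_alloc_final_bounds_general N C ε hε T α hα0 hstep
end

section
/- In a (d+1)-layered DAG, if predicted weights alpha-hat satisfy max_v max(alpha-hat_v / alpha*_v, alpha*_v / alpha-hat_v) <= eta for weights alpha* achieving flow value at least (1-eps) OPT via proportional allocation, then proportional allocation with alpha-hat achieves flow value at least (1-eps)/eta^{2d} times OPT. The proof is by induction on layers: min(Alloc-hat_a, C_a) >= (1/eta^{2j}) min(Alloc*_a, C_a) for every vertex a in layer j. -/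
open Finset

/-- Proportional allocation in a layered DAG: `LayerAlloc NI N lay C w j v` is the amount
of flow arriving at vertex `v`, assuming `v` lies in layer `j+1`. Layer-1 vertices receive
flow from the unit-supply impressions; a vertex in layer `j+2` receives from each layer
`j+1` vertex `u` its feasible load `min (Alloc u) (C u)` split proportionally to the
weights of `u`'s out-neighbors. -/
noncomputable def LayerAlloc {I V : Type*} [Fintype I] [Fintype V] [DecidableEq V]
    (NI : I → Finset V) (N : V → Finset V) (lay : V → ℕ) (C : V → ℝ)
    (w : V → ℝ) : ℕ → V → ℝ
  | 0 => fun v => ∑ i : I, if v ∈ NI i then w v / ∑ v' ∈ NI i, w v' else 0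
  | (j + 1) => fun v => ∑ u : V,
      if v ∈ N u ∧ lay u = j + 1 then
        min (LayerAlloc NI N lay C w j u) (C u) * (w v / ∑ v' ∈ N u, w v')
      else 0

/-- The value of the proportional flow with weights `w`: total feasible load of the last
layer `d`. -/
noncomputable def LayerVal {I V : Type*} [Fintype I] [Fintype V] [DecidableEq V]
    (NI : I → Finset V) (N : V → Finset V) (lay : V → ℕ) (C : V → ℝ)
    (d : ℕ) (w : V → ℝ) : ℝ :=
  ∑ v : V, if lay v = d then min (LayerAlloc NI N lay C w (d - 1) v) (C v) else 0

/-!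
Perturbing every weight by a factor at most `η` changes each proportional share
`w v / ∑ w` by a factor at most `η²`, since numerator and denominator each move by at
most `η`. Capping by `C` and splitting proportionally both preserve a lower bound of the
form `c · (flow under αs)` with `c ≤ 1`, so induction on the layers shows that the
allocation with `αh` at layer `j` is at least `η^{-2j}` times that with `αs`.
-/

theorem share_mul_inv_sq_le {ι : Type*} {s : Finset ι} {v : ι} (hv : v ∈ s) {a b : ι → ℝ}
    (ha : ∀ x ∈ s, 0 < a x) (hb : ∀ x ∈ s, 0 < b x) {η : ℝ}
    (hab : ∀ x ∈ s, a x ≤ η * b x ∧ b x ≤ η * a x) :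
    (η ^ 2)⁻¹ * (b v / ∑ x ∈ s, b x) ≤ a v / ∑ x ∈ s, a x := by
  have hsum_a : 0 < ∑ x ∈ s, a x := sum_pos ha ⟨v, hv⟩
  have hsum_b : 0 < ∑ x ∈ s, b x := sum_pos hb ⟨v, hv⟩
  have hsum_le : ∑ x ∈ s, a x ≤ η * ∑ x ∈ s, b x := by
    rw [mul_sum]
    exact sum_le_sum fun x hx => (hab x hx).1
  have hη : 0 < η := pos_of_mul_pos_left ((hb v hv).trans_le (hab v hv).2) (ha v hv).le
  rw [← div_eq_inv_mul, div_div, div_le_div_iff₀ (by positivity) hsum_a]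
  calc b v * ∑ x ∈ s, a x ≤ (η * a v) * (η * ∑ x ∈ s, b x) :=
        mul_le_mul (hab v hv).2 hsum_le hsum_a.le (mul_nonneg hη.le (ha v hv).le)
    _ = a v * ((∑ x ∈ s, b x) * η ^ 2) := by ring

theorem mul_min_le_min {c x y C : ℝ} (hc0 : 0 ≤ c) (hc1 : c ≤ 1) (hC : 0 ≤ C)
    (h : c * y ≤ x) : c * min y C ≤ min x C :=
  (mul_min_of_nonneg y C hc0).trans_le (min_le_min h (mul_le_of_le_one_left hC hc1))

section LayerAlloc

variable {I V : Type*} [Fintype I] [Fintype V] [DecidableEq V]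
  {NI : I → Finset V} {N : V → Finset V} {lay : V → ℕ} {C : V → ℝ}

theorem LayerAlloc_nonneg {w : V → ℝ} (hw : ∀ v, 0 ≤ w v) (hC : ∀ v, 0 ≤ C v) :
    ∀ j v, 0 ≤ LayerAlloc NI N lay C w j v := by
  have hshare (s : Finset V) (v : V) : 0 ≤ w v / ∑ x ∈ s, w x :=
    div_nonneg (hw v) (sum_nonneg fun x _ => hw x)
  intro j
  induction j with
  | zero =>
    intro v
    exact sum_nonneg fun i _ => by split <;> simp [hshare]
  | succ j ih =>
    intro v
    exact sum_nonneg fun u _ => by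
      split
      · exact mul_nonneg (le_min (ih u) (hC u)) (hshare _ v)
      · exact le_rfl

variable {αh αs : V → ℝ} {c : ℝ}

theorem mul_pow_LayerAlloc_le (hc0 : 0 ≤ c) (hc1 : c ≤ 1) (hC : ∀ v, 0 ≤ C v)
    (hαh : ∀ v, 0 ≤ αh v) (hαs : ∀ v, 0 ≤ αs v)
    (hshare : ∀ s : Finset V, ∀ v ∈ s,
      c * (αs v / ∑ x ∈ s, αs x) ≤ αh v / ∑ x ∈ s, αh x) :
    ∀ j v, c ^ (j + 1) * LayerAlloc NI N lay C αs j v ≤ LayerAlloc NI N lay C αh j v := by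
  intro j
  induction j with
  | zero =>
    intro v
    rw [LayerAlloc, LayerAlloc, mul_sum]
    refine sum_le_sum fun i _ => ?_
    split
    · simpa using hshare _ v ‹_›
    · simp
  | succ j ih =>
    intro v
    rw [LayerAlloc, LayerAlloc, mul_sum]
    refine sum_le_sum fun u _ => ?_
    split
    · rename_i hvu
      have hmin : c ^ (j + 1) * min (LayerAlloc NI N lay C αs j u) (C u) ≤
          min (LayerAlloc NI N lay C αh j u) (C u) :=
        mul_min_le_min (pow_nonneg hc0 _) (pow_le_one₀ hc0 hc1) (hC u) (ih u)
      calc c ^ (j + 1 + 1) *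
            (min (LayerAlloc NI N lay C αs j u) (C u) * (αs v / ∑ x ∈ N u, αs x))
          = (c ^ (j + 1) * min (LayerAlloc NI N lay C αs j u) (C u)) *
            (c * (αs v / ∑ x ∈ N u, αs x)) := by ring
        _ ≤ min (LayerAlloc NI N lay C αh j u) (C u) * (αh v / ∑ x ∈ N u, αh x) :=
          mul_le_mul hmin (hshare _ v hvu.1)
            (mul_nonneg hc0 (div_nonneg (hαs v) (sum_nonneg fun x _ => hαs x)))
            (le_min (LayerAlloc_nonneg hαh hC j u) (hC u))
    · simp

theorem mul_pow_LayerVal_le {d : ℕ} (hd : 1 ≤ d) (hc0 : 0 ≤ c) (hc1 : c ≤ 1)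
    (hC : ∀ v, 0 ≤ C v) (hαh : ∀ v, 0 ≤ αh v) (hαs : ∀ v, 0 ≤ αs v)
    (hshare : ∀ s : Finset V, ∀ v ∈ s,
      c * (αs v / ∑ x ∈ s, αs x) ≤ αh v / ∑ x ∈ s, αh x) :
    c ^ d * LayerVal NI N lay C d αs ≤ LayerVal NI N lay C d αh := by
  rw [LayerVal, LayerVal, mul_sum]
  refine sum_le_sum fun v _ => ?_
  split
  · have h := mul_pow_LayerAlloc_le (NI := NI) (N := N) (lay := lay) hc0 hc1 hC hαh hαs
      hshare (d - 1) v
    rw [Nat.sub_add_cancel hd] at h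
    exact mul_min_le_min (pow_nonneg hc0 _) (pow_le_one₀ hc0 hc1) (hC v) h
  · simp

end LayerAlloc

theorem layered_parameter_robustness_general
    {I V : Type*} [Fintype I] [Fintype V] [DecidableEq V]
    (NI : I → Finset V) (N : V → Finset V) (lay : V → ℕ) (C : V → ℝ)
    (d : ℕ) (hd : 1 ≤ d)
    (hC : ∀ v, 0 < C v)
    (αh αs : V → ℝ) (hαh : ∀ v, 0 < αh v) (hαs : ∀ v, 0 < αs v)
    (η : ℝ) (hη : 1 ≤ η)
    (hratio : ∀ v, αh v ≤ η * αs v ∧ αs v ≤ η * αh v)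
    (ε OPT : ℝ)
    (hstar : (1 - ε) * OPT ≤ LayerVal NI N lay C d αs) :
    ((1 - ε) / η ^ (2 * d)) * OPT ≤ LayerVal NI N lay C d αh := by
  have hc0 : 0 ≤ (η ^ 2)⁻¹ := by positivity
  have hc1 : (η ^ 2)⁻¹ ≤ 1 := inv_le_one_of_one_le₀ (one_le_pow₀ hη)
  have hval := mul_pow_LayerVal_le (NI := NI) (N := N) (lay := lay) hd hc0 hc1
    (fun v => (hC v).le) (fun v => (hαh v).le) (fun v => (hαs v).le)
    fun s v hv => share_mul_inv_sq_le hv (fun x _ => hαh x) (fun x _ => hαs x)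
      fun x _ => hratio x
  calc ((1 - ε) / η ^ (2 * d)) * OPT = ((η ^ 2)⁻¹) ^ d * ((1 - ε) * OPT) := by
        rw [pow_mul, inv_pow]; ring
    _ ≤ ((η ^ 2)⁻¹) ^ d * LayerVal NI N lay C d αs := by gcongr
    _ ≤ LayerVal NI N lay C d αh := hval

/-- Parameter robustness in a `(d+1)`-layered DAG: if the predicted weights `αh` agree
with weights `αs` up to a factor `η`, and proportional allocation with `αs` achieves flow
value at least `(1-ε)·OPT`, then proportional allocation with `αh` achieves flow value at
least `((1-ε)/η^{2d})·OPT`. -/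
theorem layered_parameter_robustness
    {I V : Type*} [Fintype I] [Fintype V] [DecidableEq V]
    (NI : I → Finset V) (N : V → Finset V) (lay : V → ℕ) (C : V → ℝ)
    (d : ℕ) (hd : 1 ≤ d)
    (hlay : ∀ v, 1 ≤ lay v ∧ lay v ≤ d)
    (hNI : ∀ i, (NI i).Nonempty ∧ ∀ v ∈ NI i, lay v = 1)
    (hN : ∀ u : V, lay u < d → (N u).Nonempty)
    (hNlay : ∀ u v : V, v ∈ N u → lay v = lay u + 1)
    (hC : ∀ v, 0 < C v)
    (αh αs : V → ℝ) (hαh : ∀ v, 0 < αh v) (hαs : ∀ v, 0 < αs v)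
    (η : ℝ) (hη : 1 ≤ η)
    (hratio : ∀ v, αh v ≤ η * αs v ∧ αs v ≤ η * αh v)
    (ε OPT : ℝ) (hε : 0 ≤ ε) (hε1 : ε ≤ 1) (hOPT : 0 ≤ OPT)
    (hstar : (1 - ε) * OPT ≤ LayerVal NI N lay C d αs) :
    ((1 - ε) / η ^ (2 * d)) * OPT ≤ LayerVal NI N lay C d αh :=
  layered_parameter_robustness_general NI N lay C d hd hC αh αs hαh hαs η hη hratio ε OPT hstar
end

section
/- Let D be a product distribution over n-job instances (each job independently present/absent or with independent type), m machines, and weights w inducing fractional loads L_i(w,S) = sum_{j in S} x_{ij}(w) with x_{ij}(w) in [0,1] independent across jobs. If E[OPT(S)] >= ((4+2eps)/eps^2) log(m/sqrt(eps)) and max_i E[L_i(w,S)] >= E[OPT(S)] and max_i E[L_i(w,S)] >= n/m, then E[max_i L_i(w,S)] <= (1+2eps) max_i E[L_i(w,S)]. -/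
/-!
Each load `L_i` is a sum of independent `[0,1]` variables with mean at most `μ = max_i E[L_i]`,
so the multiplicative Chernoff bound gives `P(L_i ≥ (1+ε)μ) ≤ exp(-ε²μ/(2+ε)) ≤ ε/m²`, the
last step because `μ ≥ E[OPT] ≥ ((4+2ε)/ε²) log(m/√ε)`. Since the makespan never exceeds `n`
and `μ ≥ n/m`, `E[max_i L_i] ≤ (1+ε)μ + n · m · ε/m² = (1+ε)μ + ε n/m ≤ (1+2ε)μ`.
-/

open MeasureTheory ProbabilityTheory

namespace Real

theorem exp_two_mul_div_two_add_le_one_add {x : ℝ} (h0 : 0 ≤ x) (h1 : x ≤ 1) :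
    exp (2 * x / (2 + x)) ≤ 1 + x := by
  set t := 2 * x / (2 + x) with ht_def
  have ht : t * (2 + x) = 2 * x := by rw [ht_def]; field_simp
  have ht0 : 0 ≤ t := by positivity
  have ht1 : t ≤ 1 := by rw [ht_def, div_le_one (by linarith)]; linarith
  have hcubic : exp t ≤ 1 + t + t ^ 2 / 2 + 2 * t ^ 3 / 9 := by
    have h := exp_bound' ht0 ht1 (n := 3) (by norm_num)
    norm_num [Finset.sum_range_succ, Nat.factorial] at h
    linarith
  nlinarith [sq_nonneg t, sq_nonneg (t - x), mul_nonneg h0 ht0]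

theorem exp_mul_le_one_add_mul {x : ℝ} (hx : x ∈ Set.Icc (0 : ℝ) 1) (t : ℝ) :
    exp (t * x) ≤ 1 + (exp t - 1) * x := by
  have h := convexOn_exp.2 (Set.mem_univ 0) (Set.mem_univ t) (sub_nonneg.2 hx.2) hx.1
    (sub_add_cancel 1 x)
  simp only [smul_eq_mul, mul_zero, zero_add, exp_zero, mul_one] at h
  rw [mul_comm t x]
  linarith

end Real

section Chernoff

variable {Ω ι : Type*} [MeasurableSpace Ω] {μ : Measure Ω} [IsProbabilityMeasure μ]

theorem mgf_le_exp_mul_integral_of_mem_Icc {Y : Ω → ℝ} (hY : Measurable Y)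
    (hb : ∀ ω, Y ω ∈ Set.Icc (0 : ℝ) 1) (t : ℝ) :
    mgf Y μ t ≤ Real.exp ((Real.exp t - 1) * μ[Y]) := by
  have hYint : Integrable Y μ := .of_mem_Icc 0 1 hY.aemeasurable (ae_of_all _ hb)
  calc mgf Y μ t ≤ ∫ ω, (1 + (Real.exp t - 1) * Y ω) ∂μ :=
        integral_mono (integrable_exp_mul_of_mem_Icc hY.aemeasurable (ae_of_all _ hb))
          ((integrable_const 1).add (hYint.const_mul _))
          fun ω ↦ Real.exp_mul_le_one_add_mul (hb ω) t
    _ = 1 + (Real.exp t - 1) * μ[Y] := by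
        rw [integral_add (integrable_const 1) (hYint.const_mul _), integral_const_mul]
        simp
    _ ≤ Real.exp ((Real.exp t - 1) * μ[Y]) := by
        linarith [Real.add_one_le_exp ((Real.exp t - 1) * μ[Y])]

variable [Fintype ι] {Y : ι → Ω → ℝ}

theorem measureReal_sum_ge_le_exp (hY : ∀ j, Measurable (Y j)) (hindep : iIndepFun Y μ)
    (hb : ∀ j ω, Y j ω ∈ Set.Icc (0 : ℝ) 1) {a c t : ℝ} (ht : 0 ≤ t)
    (hc : ∫ ω, ∑ j, Y j ω ∂μ ≤ c) :
    μ.real {ω | a ≤ ∑ j, Y j ω} ≤ Real.exp (-t * a + (Real.exp t - 1) * c) := by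
  have hsum : ∀ ω, ∑ j, Y j ω ∈ Set.Icc (0 : ℝ) (Fintype.card ι) := fun ω ↦
    ⟨Finset.sum_nonneg fun j _ ↦ (hb j ω).1,
      (Finset.sum_le_card_nsmul _ _ 1 fun j _ ↦ (hb j ω).2).trans_eq (by simp)⟩
  have hmgf : mgf (fun ω ↦ ∑ j, Y j ω) μ t ≤ Real.exp ((Real.exp t - 1) * c) := by
    have hYint : ∀ j, Integrable (Y j) μ := fun j ↦
      .of_mem_Icc 0 1 (hY j).aemeasurable (ae_of_all _ (hb j))
    have hfun : (fun ω ↦ ∑ j, Y j ω) = ∑ j, Y j := by ext ω; simp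
    calc mgf (fun ω ↦ ∑ j, Y j ω) μ t = ∏ j, mgf (Y j) μ t := by
          rw [hfun, hindep.mgf_sum hY]
      _ ≤ ∏ j, Real.exp ((Real.exp t - 1) * μ[Y j]) :=
          Finset.prod_le_prod (fun _ _ ↦ mgf_nonneg)
            fun j _ ↦ mgf_le_exp_mul_integral_of_mem_Icc (hY j) (hb j) t
      _ = Real.exp ((Real.exp t - 1) * ∫ ω, ∑ j, Y j ω ∂μ) := by
          rw [← Real.exp_sum, ← Finset.mul_sum, integral_finsetSum _ fun j _ ↦ hYint j]
      _ ≤ Real.exp ((Real.exp t - 1) * c) := by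
          gcongr
          linarith [Real.one_le_exp ht]
  calc μ.real {ω | a ≤ ∑ j, Y j ω}
      ≤ Real.exp (-t * a) * mgf (fun ω ↦ ∑ j, Y j ω) μ t :=
        measure_ge_le_exp_mul_mgf a ht <| integrable_exp_mul_of_mem_Icc
          (Finset.measurable_sum _ fun j _ ↦ hY j).aemeasurable (ae_of_all _ hsum)
    _ ≤ Real.exp (-t * a) * Real.exp ((Real.exp t - 1) * c) := by gcongr
    _ = Real.exp (-t * a + (Real.exp t - 1) * c) := (Real.exp_add _ _).symm

-- Take `t = 2ε/(2+ε)`, which is at most `log (1+ε)`.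
theorem measureReal_sum_ge_one_add_mul_le_exp (hY : ∀ j, Measurable (Y j))
    (hindep : iIndepFun Y μ) (hb : ∀ j ω, Y j ω ∈ Set.Icc (0 : ℝ) 1) {c ε : ℝ}
    (hε0 : 0 ≤ ε) (hε1 : ε ≤ 1) (hc : ∫ ω, ∑ j, Y j ω ∂μ ≤ c) :
    μ.real {ω | (1 + ε) * c ≤ ∑ j, Y j ω} ≤ Real.exp (-(ε ^ 2 / (2 + ε)) * c) := by
  have hc0 : 0 ≤ c := (integral_nonneg fun ω ↦ Finset.sum_nonneg fun j _ ↦ (hb j ω).1).trans hc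
  refine (measureReal_sum_ge_le_exp hY hindep hb (t := 2 * ε / (2 + ε)) (by positivity) hc).trans
    (Real.exp_le_exp.2 ?_)
  have hexp := Real.exp_two_mul_div_two_add_le_one_add hε0 hε1
  have hexponent : -(2 * ε / (2 + ε)) * (1 + ε) + ε = -(ε ^ 2 / (2 + ε)) := by
    field_simp; ring
  nlinarith

theorem integral_iSup_le_add_mul_sum_measureReal {L : ι → Ω → ℝ} (hL : ∀ i, Measurable (L i))
    {B c : ℝ} (hLB : ∀ i ω, L i ω ∈ Set.Icc 0 B) (hc : 0 ≤ c) :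
    ∫ ω, ⨆ i, L i ω ∂μ ≤ c + B * ∑ i, μ.real {ω | c ≤ L i ω} := by
  set E : ι → Set Ω := fun i ↦ {ω | c ≤ L i ω}
  have hE : ∀ i, MeasurableSet (E i) := fun i ↦ measurableSet_le measurable_const (hL i)
  have hind : ∀ i ω, 0 ≤ (E i).indicator (fun _ ↦ B) ω := fun i ↦
    Set.indicator_nonneg fun ω _ ↦ (hLB i ω).1.trans (hLB i ω).2
  have hpoint : ∀ ω, ⨆ i, L i ω ≤ c + ∑ i, (E i).indicator (fun _ ↦ B) ω := fun ω ↦ by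
    refine Real.iSup_le (fun i ↦ ?_) (add_nonneg hc (Finset.sum_nonneg fun i _ ↦ hind i ω))
    have hsingle : (E i).indicator (fun _ ↦ B) ω ≤ ∑ i, (E i).indicator (fun _ ↦ B) ω :=
      Finset.single_le_sum (fun i _ ↦ hind i ω) (Finset.mem_univ i)
    by_cases hi : ω ∈ E i
    · rw [Set.indicator_of_mem hi] at hsingle
      linarith [(hLB i ω).2]
    · linarith [le_of_not_ge (show ¬c ≤ L i ω from hi), hind i ω]
  have hint : ∀ i, Integrable ((E i).indicator fun _ ↦ B) μ := fun i ↦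
    (integrable_const B).indicator (hE i)
  calc ∫ ω, ⨆ i, L i ω ∂μ ≤ ∫ ω, (c + ∑ i, (E i).indicator (fun _ ↦ B) ω) ∂μ :=
        integral_mono_of_nonneg (ae_of_all _ fun ω ↦ Real.iSup_nonneg fun i ↦ (hLB i ω).1)
          ((integrable_const c).add (integrable_finsetSum _ fun i _ ↦ hint i))
          (ae_of_all _ hpoint)
    _ = c + B * ∑ i, μ.real (E i) := by
        rw [integral_add (integrable_const c) (integrable_finsetSum _ fun i _ ↦ hint i),
          integral_finsetSum _ fun i _ ↦ hint i, Finset.mul_sum]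
        simp [integral_indicator_const _ (hE _), mul_comm]

end Chernoff

theorem exp_neg_mul_le_div_sq {ε M c : ℝ} (hε : 0 < ε) (hM : 0 < M)
    (hc : (4 + 2 * ε) / ε ^ 2 * Real.log (M / Real.sqrt ε) ≤ c) :
    Real.exp (-(ε ^ 2 / (2 + ε)) * c) ≤ ε / M ^ 2 := by
  have hlog : Real.log (M ^ 2 / ε) ≤ ε ^ 2 / (2 + ε) * c := by
    rw [show M ^ 2 / ε = (M / Real.sqrt ε) ^ 2 by rw [div_pow, Real.sq_sqrt hε.le],
      Real.log_pow]
    rw [div_mul_eq_mul_div, div_le_iff₀ (by positivity)] at hc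
    rw [div_mul_eq_mul_div, le_div_iff₀ (by positivity)]
    push_cast
    nlinarith
  calc Real.exp (-(ε ^ 2 / (2 + ε)) * c) ≤ Real.exp (-Real.log (M ^ 2 / ε)) := by
        gcongr; linarith
    _ = ε / M ^ 2 := by rw [Real.exp_neg, Real.exp_log (by positivity), inv_div]

theorem expected_makespan_close_to_max_expected_load_general
    {Ω : Type*} [MeasureSpace Ω] [IsProbabilityMeasure (ℙ : Measure Ω)]
    (m n : ℕ)
    (X : Fin m → Fin n → Ω → ℝ)
    (hmeas : ∀ i j, Measurable (X i j))
    (hindep : ∀ i, iIndepFun (X i) ℙ)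
    (hbdd : ∀ i j ω, X i j ω ∈ Set.Icc (0 : ℝ) 1)
    (OPT : Ω → ℝ)
    (ε : ℝ) (hε : ε ∈ Set.Ioo (0 : ℝ) 1)
    (hEOPT : ((4 + 2 * ε) / ε ^ 2) * Real.log ((m : ℝ) / Real.sqrt ε) ≤ ∫ ω, OPT ω ∂ℙ)
    (hmax1 : (∫ ω, OPT ω ∂ℙ) ≤ ⨆ i : Fin m, ∫ ω, ∑ j, X i j ω ∂ℙ)
    (hmax2 : (n : ℝ) / m ≤ ⨆ i : Fin m, ∫ ω, ∑ j, X i j ω ∂ℙ) :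
    (∫ ω, ⨆ i : Fin m, ∑ j, X i j ω ∂ℙ) ≤
      (1 + 2 * ε) * ⨆ i : Fin m, ∫ ω, ∑ j, X i j ω ∂ℙ := by
  obtain ⟨hε0, hε1⟩ := hε
  set μ := ⨆ i : Fin m, ∫ ω, ∑ j, X i j ω ∂ℙ
  have hμ0 : 0 ≤ μ := (by positivity : (0 : ℝ) ≤ n / m).trans hmax2
  have hload : ∀ i ω, ∑ j, X i j ω ∈ Set.Icc (0 : ℝ) n := fun i ω ↦
    ⟨Finset.sum_nonneg fun j _ ↦ (hbdd i j ω).1,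
      (Finset.sum_le_card_nsmul _ _ 1 fun j _ ↦ (hbdd i j ω).2).trans_eq (by simp)⟩
  have htail : ∀ i, (ℙ : Measure Ω).real {ω | (1 + ε) * μ ≤ ∑ j, X i j ω} ≤ ε / m ^ 2 := fun i ↦
    (measureReal_sum_ge_one_add_mul_le_exp (hmeas i) (hindep i) (hbdd i) hε0.le hε1.le
      (le_ciSup (Finite.bddAbove_range fun i ↦ ∫ ω, ∑ j, X i j ω ∂ℙ) i)).trans
    (exp_neg_mul_le_div_sq hε0 (Nat.cast_pos.2 i.pos) (hEOPT.trans hmax1))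
  have hcount : (m : ℝ) * (ε / m ^ 2) = ε / m := by
    rcases eq_or_ne (m : ℝ) 0 with hm | hm
    · simp [hm]
    · field_simp
  calc (∫ ω, ⨆ i : Fin m, ∑ j, X i j ω ∂ℙ)
      ≤ (1 + ε) * μ + n * ∑ i, (ℙ : Measure Ω).real {ω | (1 + ε) * μ ≤ ∑ j, X i j ω} :=
        integral_iSup_le_add_mul_sum_measureReal
          (fun i ↦ Finset.measurable_sum _ fun j _ ↦ hmeas i j) hload (by positivity)
    _ ≤ (1 + ε) * μ + n * ∑ _i : Fin m, ε / m ^ 2 := by gcongr with i; exact htail i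
    _ = (1 + ε) * μ + ε * (n / m) := by
        rw [Finset.sum_const, Finset.card_univ, Fintype.card_fin, nsmul_eq_mul, hcount]; ring
    _ ≤ (1 + 2 * ε) * μ := by nlinarith

/-- If each machine load `L_i = ∑_j X i j` is a sum of `n` independent `[0,1]`-valued
random variables, `E[OPT] ≥ ((4+2ε)/ε²)·log(m/√ε)`, `max_i E[L_i] ≥ E[OPT]`, and
`max_i E[L_i] ≥ n/m`, then `E[max_i L_i] ≤ (1+2ε)·max_i E[L_i]`. -/
theorem expected_makespan_close_to_max_expected_load
    {Ω : Type*} [MeasureSpace Ω] [IsProbabilityMeasure (ℙ : Measure Ω)]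
    (m n : ℕ) [NeZero m]
    (X : Fin m → Fin n → Ω → ℝ)
    (hmeas : ∀ i j, Measurable (X i j))
    (hindep : ∀ i, iIndepFun (X i) ℙ)
    (hbdd : ∀ i j ω, X i j ω ∈ Set.Icc (0 : ℝ) 1)
    (OPT : Ω → ℝ) (hOPTmeas : Measurable OPT)
    (ε : ℝ) (hε : ε ∈ Set.Ioo (0 : ℝ) 1)
    (hEOPT : ((4 + 2 * ε) / ε ^ 2) * Real.log ((m : ℝ) / Real.sqrt ε) ≤ ∫ ω, OPT ω ∂ℙ)
    (hmax1 : (∫ ω, OPT ω ∂ℙ) ≤ ⨆ i : Fin m, ∫ ω, ∑ j, X i j ω ∂ℙ)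
    (hmax2 : (n : ℝ) / m ≤ ⨆ i : Fin m, ∫ ω, ∑ j, X i j ω ∂ℙ) :
    (∫ ω, ⨆ i : Fin m, ∑ j, X i j ω ∂ℙ) ≤
      (1 + 2 * ε) * ⨆ i : Fin m, ∫ ω, ∑ j, X i j ω ∂ℙ :=
  expected_makespan_close_to_max_expected_load_general m n X hmeas hindep hbdd OPT ε hε hEOPT hmax1
    hmax2
end
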